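/- arXiv:2208.11465 — 2 statements merged into one kernel-verified Lean document; each statement's English description precedes it below -/
import Mathlib

section
/- Let n ≥ 1, 0 < s < 1, r > 0, and let W, Ω ⊂ ℝⁿ be measurable sets with dist(W, Ω) ≥ r and |W| < ∞. Then for all g ∈ L²(W) and h ∈ L²(Ω) one has ∫_Ω ∫_W |g(y)| |h(x)| / |x−y|^{n+2s} dy dx ≤ (n ω_n / ((n+4s) r^{n+4s}))^{1/2} |W|^{1/2} ‖g‖_{L²(W)} ‖h‖_{L²(Ω)}, where ω_n denotes the Lebesgue measure of the unit ball of ℝⁿ. -/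
open MeasureTheory Filter
open scoped ENNReal Topology FourierTransform

noncomputable section

/-- Euclidean space `ℝⁿ`. -/
abbrev Euc (n : ℕ) := EuclideanSpace ℝ (Fin n)

/-- The constant `C_{n,s} = 4^s Γ(n/2+s)/(π^{n/2}|Γ(-s)|)`. -/
def Cns (n : ℕ) (s : ℝ) : ℝ :=
  (4 : ℝ) ^ s * Real.Gamma ((n : ℝ) / 2 + s) /
    (Real.pi ^ ((n : ℝ) / 2) * |Real.Gamma (-s)|)

/-- The Gagliardo-type kernel `(u(x)-u(y))(v(x)-v(y))/|x-y|^{n+2s}`. -/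
def gagliardoKer (n : ℕ) (s : ℝ) (u v : Euc n → ℝ) (p : Euc n × Euc n) : ℝ :=
  (u p.1 - u p.2) * (v p.1 - v p.2) / ‖p.1 - p.2‖ ^ ((n : ℝ) + 2 * s)

/-- Membership in the fractional Sobolev space `H^s(ℝⁿ)`:
`u ∈ L²` and the Gagliardo integrand is integrable on `ℝⁿ × ℝⁿ`. -/
def MemHs (n : ℕ) (s : ℝ) (u : Euc n → ℝ) : Prop :=
  MemLp u 2 volume ∧ Integrable (gagliardoKer n s u u) volume

/-- The Gagliardo seminorm `[u]_s`. -/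
def gagliardoSemi (n : ℕ) (s : ℝ) (u : Euc n → ℝ) : ℝ :=
  Real.sqrt (∫ p : Euc n × Euc n, gagliardoKer n s u u p)

/-- The `H^s(ℝⁿ)` norm, `‖u‖² = ‖u‖_{L²}² + (C_{n,s}/2)[u]_s²`. -/
def HsNorm (n : ℕ) (s : ℝ) (u : Euc n → ℝ) : ℝ :=
  Real.sqrt ((∫ x, (u x) ^ 2) + Cns n s / 2 * ∫ p : Euc n × Euc n, gagliardoKer n s u u p)

/-- The conductivity bilinear form `B_γ(u,v)`. -/
def condForm (n : ℕ) (s : ℝ) (γ u v : Euc n → ℝ) : ℝ :=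
  Cns n s / 2 * ∫ p : Euc n × Euc n,
    Real.sqrt (γ p.1) * Real.sqrt (γ p.2) * (u p.1 - u p.2) * (v p.1 - v p.2) /
      ‖p.1 - p.2‖ ^ ((n : ℝ) + 2 * s)

/-- `φ ∈ C_c^∞(Ω)`. -/
def IsTestFun (n : ℕ) (Ω : Set (Euc n)) (φ : Euc n → ℝ) : Prop :=
  ContDiff ℝ (⊤ : ℕ∞) φ ∧ HasCompactSupport φ ∧ tsupport φ ⊆ Ω

/-- Membership in `H̃^s(Ω)`, the closure of `C_c^∞(Ω)` in `H^s(ℝⁿ)`. -/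
def MemTildeHs (n : ℕ) (s : ℝ) (Ω : Set (Euc n)) (u : Euc n → ℝ) : Prop :=
  MemHs n s u ∧ ∃ φ : ℕ → Euc n → ℝ, (∀ k, IsTestFun n Ω (φ k)) ∧
    Tendsto (fun k => HsNorm n s (fun x => u x - φ k x)) atTop (𝓝 0)

/-- `u` is a weak solution of the fractional conductivity equation in `Ω`
with exterior value `f`. -/
def IsWeakSol (n : ℕ) (s : ℝ) (γ : Euc n → ℝ) (Ω : Set (Euc n)) (f u : Euc n → ℝ) : Prop :=
  MemHs n s u ∧ MemTildeHs n s Ω (fun x => u x - f x) ∧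
    ∀ φ, IsTestFun n Ω φ → condForm n s γ u φ = 0

/-- `Ω` is bounded in one direction. -/
def BddOneDir (n : ℕ) (Ω : Set (Euc n)) : Prop :=
  ∃ (e : Euc n) (R : ℝ), ‖e‖ = 1 ∧ 0 < R ∧ ∀ x ∈ Ω, |(inner ℝ x e : ℝ)| ≤ R

/-- The Bessel potential operator `⟨D⟩^s` applied to a Schwartz function,
defined via the Fourier transform. -/
def besselOp (n : ℕ) (s : ℝ) (φ : SchwartzMap (Euc n) ℂ) : Euc n → ℂ :=
  fun x => 𝓕⁻ (fun ξ : Euc n => ((((1 : ℝ) + ‖ξ‖ ^ 2) ^ (s / 2) : ℝ) : ℂ) * 𝓕 (fun y => φ y) ξ) x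

/-- `w = ⟨D⟩^s u` in the sense of tempered distributions (via duality with
Schwartz functions). -/
def IsBesselDeriv (n : ℕ) (s : ℝ) (u w : Euc n → ℝ) : Prop :=
  ∀ φ : SchwartzMap (Euc n) ℂ,
    Integrable (fun x => (u x : ℂ) * besselOp n s φ x) volume ∧
    Integrable (fun x => (w x : ℂ) * φ x) volume ∧
    ∫ x, (u x : ℂ) * besselOp n s φ x = ∫ x, (w x : ℂ) * φ x

/-- Membership in the Bessel potential space `H^{s,p}(ℝⁿ)`. -/
def MemBessel (n : ℕ) (s p : ℝ) (u : Euc n → ℝ) : Prop :=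
  ∃ w, MemLp w (ENNReal.ofReal p) volume ∧ IsBesselDeriv n s u w

/-- `(-Δ)^{s/2}` of a Schwartz function via the singular integral
(absolutely convergent for `0 < s < 1`). -/
def fracLapSch (n : ℕ) (s : ℝ) (ψ : SchwartzMap (Euc n) ℝ) : Euc n → ℝ :=
  fun x => Cns n (s / 2) * ∫ y, (ψ x - ψ y) / ‖x - y‖ ^ ((n : ℝ) + s)

/-- `w = (-Δ)^{s/2} u` in the distributional sense. -/
def IsFracLapHalf (n : ℕ) (s : ℝ) (u w : Euc n → ℝ) : Prop :=
  ∀ ψ : SchwartzMap (Euc n) ℝ,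
    Integrable (fun x => u x * fracLapSch n s ψ x) volume ∧
    Integrable (fun x => w x * ψ x) volume ∧
    ∫ x, u x * fracLapSch n s ψ x = ∫ x, w x * ψ x

/-- `v` is a weak solution of the fractional Schrödinger equation
`((-Δ)^s + q_γ) v = 0` in `Ω` with exterior value `f`, where
`q_γ = -γ^{-1/2}(-Δ)^s m_γ` and `m_γ = γ^{1/2} - 1`. -/
def IsWeakSolSchrod (n : ℕ) (s : ℝ) (γ : Euc n → ℝ) (Ω : Set (Euc n)) (f v : Euc n → ℝ) :
    Prop :=
  MemHs n s v ∧ MemTildeHs n s Ω (fun x => v x - f x) ∧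
    ∀ φ, IsTestFun n Ω φ →
      ∃ A B a c : Euc n → ℝ,
        IsFracLapHalf n s v A ∧ MemLp A 2 volume ∧
        IsFracLapHalf n s φ B ∧ MemLp B 2 volume ∧
        IsFracLapHalf n s (fun x => Real.sqrt (γ x) - 1) a ∧
          MemLp a (ENNReal.ofReal ((n : ℝ) / s)) volume ∧
        IsFracLapHalf n s (fun x => v x * φ x / Real.sqrt (γ x)) c ∧
          MemLp c (ENNReal.ofReal ((n : ℝ) / ((n : ℝ) - s))) volume ∧
        Integrable (fun x => A x * B x) volume ∧ Integrable (fun x => a x * c x) volume ∧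
        (∫ x, A x * B x) - (∫ x, a x * c x) = 0

/-- The class `M^s_{γ₀}` of conductivities. -/
def MemMclass (n : ℕ) (s γ₀ : ℝ) (γ : Euc n → ℝ) : Prop :=
  MemLp γ ⊤ volume ∧ (∀ᵐ x, γ₀ ≤ γ x) ∧
    ∀ Ω' : Set (Euc n), IsOpen Ω' → ∀ u, MemTildeHs n s Ω' u →
      MemTildeHs n s Ω' (fun x => Real.sqrt (γ x) * u x) ∧
      MemTildeHs n s Ω' (fun x => u x / Real.sqrt (γ x))

/-- The essential support of a function: the complement of the largest open set
on which `f` vanishes almost everywhere. -/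
def essSupport (n : ℕ) (f : Euc n → ℝ) : Set (Euc n) :=
  (⋃ (U : Set (Euc n)) (_ : IsOpen U ∧ ∀ᵐ x ∂volume.restrict U, f x = 0), U)ᶜ


open Set Metric in
private lemma lintegral_fun_norm_polar {E : Type*} [NormedAddCommGroup E] [NormedSpace ℝ E]
    [MeasurableSpace E] [BorelSpace E] [FiniteDimensional ℝ E] [Nontrivial E]
    (μ : Measure E) [μ.IsAddHaarMeasure] {g : ℝ → ℝ≥0∞} (hg : Measurable g) :
    ∫⁻ x, g ‖x‖ ∂μ = (Module.finrank ℝ E) * μ (ball 0 1) *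
      ∫⁻ t in Ioi (0 : ℝ), ENNReal.ofReal (t ^ (Module.finrank ℝ E - 1)) * g t := by
  have h1 : ∫⁻ x, g ‖x‖ ∂μ = ∫⁻ x : ({0}ᶜ : Set E), g ‖(x : E)‖ ∂(μ.comap (↑)) := by
    rw [lintegral_subtype_comap (measurableSet_singleton (0 : E)).compl
      (fun x => g ‖x‖), MeasureTheory.restrict_compl_singleton]
  have h2 : ∫⁻ x : ({0}ᶜ : Set E), g ‖(x : E)‖ ∂(μ.comap (↑)) =
      ∫⁻ p : sphere (0 : E) 1 × Ioi (0 : ℝ), g p.2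
        ∂(μ.toSphere.prod (Measure.volumeIoiPow (Module.finrank ℝ E - 1))) := by
    simpa [Function.comp_def] using (μ.measurePreserving_homeomorphUnitSphereProd).lintegral_comp
      ((hg.comp (measurable_subtype_coe.comp measurable_snd) :
        Measurable fun p : sphere (0 : E) 1 × Ioi (0 : ℝ) => g p.2))
  have h3 : ∫⁻ p : sphere (0 : E) 1 × Ioi (0 : ℝ), g p.2
        ∂(μ.toSphere.prod (Measure.volumeIoiPow (Module.finrank ℝ E - 1)))
      = μ.toSphere univ * ∫⁻ t : Ioi (0 : ℝ), g t ∂(Measure.volumeIoiPow (Module.finrank ℝ E - 1)) := by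
    have := lintegral_prod_mul (μ := μ.toSphere)
      (ν := Measure.volumeIoiPow (Module.finrank ℝ E - 1))
      (f := fun _ : sphere (0 : E) 1 => (1 : ℝ≥0∞)) (g := fun t : Ioi (0 : ℝ) => g t)
      aemeasurable_const (hg.comp measurable_subtype_coe).aemeasurable
    simpa using this
  have h4 : ∫⁻ t : Ioi (0 : ℝ), g t ∂(Measure.volumeIoiPow (Module.finrank ℝ E - 1))
      = ∫⁻ t in Ioi (0 : ℝ), ENNReal.ofReal (t ^ (Module.finrank ℝ E - 1)) * g t := by
    have hm : Measurable fun t : Ioi (0 : ℝ) => g ↑t := hg.comp measurable_subtype_coe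
    rw [Measure.volumeIoiPow,
      lintegral_withDensity_eq_lintegral_mul _
        ((measurable_subtype_coe.pow_const _).ennreal_ofReal)
        hm]
    exact lintegral_subtype_comap measurableSet_Ioi
      (fun t : ℝ => ENNReal.ofReal (t ^ (Module.finrank ℝ E - 1)) * g t)
  rw [h1, h2, h3, h4, Measure.toSphere_apply_univ, mul_assoc]

open Set Metric in
private lemma lintegral_rpow_compl_ball (n : ℕ) (hn : 1 ≤ n) {r aa : ℝ} (hr : 0 < r)
    (haa : (n : ℝ) < aa) :
    ∫⁻ z in (ball (0 : Euc n) r)ᶜ, ENNReal.ofReal (‖z‖ ^ (-aa)) =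
      ENNReal.ofReal ((n : ℝ) * (volume (ball (0 : Euc n) 1)).toReal *
        (r ^ ((n : ℝ) - aa) / (aa - (n : ℝ)))) := by
  haveI : Nonempty (Fin n) := ⟨⟨0, hn⟩⟩
  have hfr : Module.finrank ℝ (Euc n) = n := finrank_euclideanSpace_fin
  have hmeas : Measurable fun t : ℝ => ENNReal.ofReal (t ^ (-aa)) :=
    (measurable_id.pow measurable_const).ennreal_ofReal
  set g0 : ℝ → ℝ≥0∞ := fun t => ENNReal.ofReal (t ^ (-aa)) with hg0
  set gi : ℝ → ℝ≥0∞ := Set.indicator (Ici r) g0 with hgi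
  have hgim : Measurable gi := hmeas.indicator measurableSet_Ici
  have key : ∫⁻ z in (ball (0 : Euc n) r)ᶜ, ENNReal.ofReal (‖z‖ ^ (-aa))
      = ∫⁻ z : Euc n, gi ‖z‖ := by
    rw [← lintegral_indicator measurableSet_ball.compl]
    refine lintegral_congr fun x => ?_
    by_cases hx : r ≤ ‖x‖
    · rw [Set.indicator_of_mem (by simpa [mem_ball, dist_zero_right, not_lt] using hx),
        hgi, Set.indicator_of_mem (Set.mem_Ici.mpr hx)]
    · rw [Set.indicator_of_notMem (by simpa [mem_ball, dist_zero_right, not_lt] using hx),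
        hgi, Set.indicator_of_notMem (by simpa using hx)]
  rw [key, lintegral_fun_norm_polar volume hgim, hfr]
  have step : ∫⁻ t in Ioi (0 : ℝ), ENNReal.ofReal (t ^ (n - 1)) * gi t
      = ∫⁻ t in Ioi r, ENNReal.ofReal (t ^ ((n : ℝ) - 1 - aa)) := by
    rw [← lintegral_indicator measurableSet_Ioi]
    have hind : (Ioi (0 : ℝ)).indicator (fun t => ENNReal.ofReal (t ^ (n - 1)) * gi t)
        = (Ici r).indicator (fun t => ENNReal.ofReal (t ^ (n - 1)) * g0 t) := by
      funext t
      rcases le_or_gt r t with ht | ht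
      · rw [Set.indicator_of_mem (Set.mem_Ioi.mpr (lt_of_lt_of_le hr ht)),
          Set.indicator_of_mem (Set.mem_Ici.mpr ht), hgi,
          Set.indicator_of_mem (Set.mem_Ici.mpr ht)]
      · rw [Set.indicator_of_notMem (s := Ici r) (by simpa using ht.not_ge)]
        by_cases ht0 : t ∈ Ioi (0 : ℝ)
        · rw [Set.indicator_of_mem ht0, hgi,
            Set.indicator_of_notMem (s := Ici r) (by simpa using ht.not_ge), mul_zero]
        · rw [Set.indicator_of_notMem ht0]
    rw [hind, lintegral_indicator measurableSet_Ici,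
      ← Measure.restrict_congr_set Ioi_ae_eq_Ici]
    refine setLIntegral_congr_fun measurableSet_Ioi (fun t ht => ?_)
    have ht0 : (0 : ℝ) < t := hr.trans ht
    rw [hg0, ← ENNReal.ofReal_mul (by positivity), ← Real.rpow_natCast t (n - 1),
      ← Real.rpow_add ht0]
    have hcast : ((n - 1 : ℕ) : ℝ) + -aa = (n : ℝ) - 1 - aa := by
      rw [Nat.cast_sub hn]; push_cast; ring
    rw [hcast]
  rw [step]
  have hb : (n : ℝ) - 1 - aa < -1 := by linarith
  have hval : ∫⁻ t in Ioi r, ENNReal.ofReal (t ^ ((n : ℝ) - 1 - aa))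
      = ENNReal.ofReal (r ^ ((n : ℝ) - aa) / (aa - (n : ℝ))) := by
    rw [← ofReal_integral_eq_lintegral_ofReal (integrableOn_Ioi_rpow_of_lt hb hr)
      ((ae_restrict_iff' measurableSet_Ioi).mpr
        (ae_of_all _ fun t ht => Real.rpow_nonneg (hr.trans ht).le _)),
      integral_Ioi_rpow_of_lt hb hr]
    congr 1
    rw [show (n : ℝ) - 1 - aa + 1 = (n : ℝ) - aa by ring,
      show (n : ℝ) - aa = -(aa - (n : ℝ)) by ring, neg_div_neg_eq]
  rw [hval, ENNReal.ofReal_mul (by positivity), ENNReal.ofReal_mul (by positivity),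
    ENNReal.ofReal_natCast, ENNReal.ofReal_toReal measure_ball_lt_top.ne]

/-- **Kernel bound** (key estimate in the proof of Lemma 3.1): for sets at
distance `≥ r` one has
`∫_Ω ∫_W |g(y)||h(x)|/|x−y|^{n+2s} ≤ (nω_n/((n+4s)r^{n+4s}))^{1/2}|W|^{1/2}‖g‖_{L²(W)}‖h‖_{L²(Ω)}`. -/
theorem stmt_5 (n : ℕ) (hn : 1 ≤ n) (s : ℝ) (hs0 : 0 < s) (hs1 : s < 1)
    (r : ℝ) (hr : 0 < r) (W Ω : Set (Euc n))
    (hWm : MeasurableSet W) (hΩm : MeasurableSet Ω) (hWfin : volume W < ⊤)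
    (hd : ∀ x ∈ Ω, ∀ y ∈ W, r ≤ dist x y)
    (g h : Euc n → ℝ)
    (hg : MemLp g 2 (volume.restrict W)) (hh : MemLp h 2 (volume.restrict Ω)) :
    ∫⁻ x in Ω, ∫⁻ y in W, ENNReal.ofReal (|g y| * |h x| / ‖x - y‖ ^ ((n : ℝ) + 2 * s)) ≤
      ENNReal.ofReal
        (Real.sqrt ((n : ℝ) * (volume (Metric.ball (0 : Euc n) 1)).toReal /
            (((n : ℝ) + 4 * s) * r ^ ((n : ℝ) + 4 * s))) *
          Real.sqrt ((volume W).toReal) *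
          ((eLpNorm g 2 (volume.restrict W)).toReal *
            (eLpNorm h 2 (volume.restrict Ω)).toReal)) := by
  haveI : Nonempty (Fin n) := ⟨⟨0, hn⟩⟩
  have hn1 : (1 : ℝ) ≤ (n : ℝ) := by exact_mod_cast hn
  set p : ℝ := (n : ℝ) + 2 * s with hp
  set aa : ℝ := ((n : ℝ) + 2 * s) * 2 with haadef
  set μW := volume.restrict W with hμW
  set μΩ := volume.restrict Ω with hμΩ
  have h22 : Real.HolderConjugate 2 2 := Real.HolderConjugate.two_two
  set Creal : ℝ := (n : ℝ) * (volume (Metric.ball (0 : Euc n) 1)).toReal /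
      (((n : ℝ) + 4 * s) * r ^ ((n : ℝ) + 4 * s)) with hCreal
  have hC0 : 0 ≤ Creal := by positivity
  have hgae : AEMeasurable (fun y => ENNReal.ofReal |g y|) μW :=
    (measurable_abs.comp_aemeasurable hg.1.aemeasurable).ennreal_ofReal
  have hhae : AEMeasurable (fun x => ENNReal.ofReal |h x|) μΩ :=
    (measurable_abs.comp_aemeasurable hh.1.aemeasurable).ennreal_ofReal
  have hker : Measurable (fun q : Euc n × Euc n => ENNReal.ofReal (‖q.1 - q.2‖ ^ (-p))) :=
    (((measurable_fst.sub measurable_snd).norm).pow measurable_const).ennreal_ofReal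
  have heLp : ∀ (f : Euc n → ℝ) (μ : Measure (Euc n)),
      eLpNorm f 2 μ = (∫⁻ x, (ENNReal.ofReal |f x|) ^ (2 : ℝ) ∂μ) ^ (1/2 : ℝ) := by
    intro f μ
    rw [eLpNorm_eq_lintegral_rpow_enorm_toReal two_ne_zero ENNReal.ofNat_ne_top]
    simp_rw [← Real.norm_eq_abs, ofReal_norm]
    norm_num
  have hsplit : ∀ x y : Euc n, ENNReal.ofReal (|g y| * |h x| / ‖x - y‖ ^ p)
      = ENNReal.ofReal |g y| * (ENNReal.ofReal |h x| * ENNReal.ofReal (‖x - y‖ ^ (-p))) := by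
    intro x y
    rw [Real.rpow_neg (norm_nonneg _), ← ENNReal.ofReal_mul (abs_nonneg _),
      ← ENNReal.ofReal_mul (abs_nonneg _)]
    congr 1
    rw [div_eq_mul_inv, mul_assoc]
  have hmprod : AEMeasurable (fun q : Euc n × Euc n =>
      ENNReal.ofReal |g q.2| * (ENNReal.ofReal |h q.1| *
        ENNReal.ofReal (‖q.1 - q.2‖ ^ (-p)))) (μΩ.prod μW) :=
    hgae.comp_snd.mul (hhae.comp_fst.mul hker.aemeasurable)
  have hLHS : (∫⁻ x in Ω, ∫⁻ y in W, ENNReal.ofReal (|g y| * |h x| / ‖x - y‖ ^ p))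
      = ∫⁻ y in W, ∫⁻ x in Ω, ENNReal.ofReal |g y| *
          (ENNReal.ofReal |h x| * ENNReal.ofReal (‖x - y‖ ^ (-p))) := by
    simp_rw [hsplit]
    exact lintegral_lintegral_swap hmprod
  -- kernel bound
  have hsub : ∀ y ∈ W, Ω ⊆ (Metric.ball y r)ᶜ := fun y hy x hx hxb =>
    absurd (hd x hx y hy) (not_le.mpr (Metric.mem_ball.mp hxb))
  have hkermeas : Measurable fun z : Euc n => ENNReal.ofReal (‖z‖ ^ (-aa)) :=
    (measurable_norm.pow measurable_const).ennreal_ofReal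
  have haan : (n : ℝ) < aa := by rw [haadef]; nlinarith
  have hker2 : ∀ y ∈ W, (∫⁻ x in Ω, ENNReal.ofReal (‖x - y‖ ^ (-aa))) ≤ ENNReal.ofReal Creal := by
    intro y hy
    have h1 : (∫⁻ x in Ω, ENNReal.ofReal (‖x - y‖ ^ (-aa)))
        ≤ ∫⁻ x in (Metric.ball y r)ᶜ, ENNReal.ofReal (‖x - y‖ ^ (-aa)) :=
      lintegral_mono_set (hsub y hy)
    have hpre : (fun x : Euc n => x - y) ⁻¹' (Metric.ball (0 : Euc n) r)ᶜ
        = (Metric.ball y r)ᶜ := by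
      ext x
      simp [Metric.mem_ball, dist_eq_norm]
    have h2 : ∫⁻ x in (Metric.ball y r)ᶜ, ENNReal.ofReal (‖x - y‖ ^ (-aa))
        = ∫⁻ z in (Metric.ball (0 : Euc n) r)ᶜ, ENNReal.ofReal (‖z‖ ^ (-aa)) := by
      rw [← hpre]
      exact (measurePreserving_sub_right volume y).setLIntegral_comp_preimage
        measurableSet_ball.compl hkermeas
    have hCeq : (n : ℝ) * (volume (Metric.ball (0 : Euc n) 1)).toReal *
        (r ^ ((n : ℝ) - aa) / (aa - (n : ℝ))) = Creal := by
      rw [hCreal, haadef,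
        show (n : ℝ) - ((n : ℝ) + 2*s)*2 = -((n : ℝ) + 4*s) by ring, Real.rpow_neg hr.le,
        show ((n : ℝ) + 2*s)*2 - (n : ℝ) = (n : ℝ) + 4*s by ring,
        div_eq_mul_inv, div_eq_mul_inv, mul_inv]
      ring
    calc (∫⁻ x in Ω, ENNReal.ofReal (‖x - y‖ ^ (-aa)))
        ≤ ∫⁻ x in (Metric.ball y r)ᶜ, ENNReal.ofReal (‖x - y‖ ^ (-aa)) := h1
      _ = ∫⁻ z in (Metric.ball (0 : Euc n) r)ᶜ, ENNReal.ofReal (‖z‖ ^ (-aa)) := h2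
      _ = ENNReal.ofReal Creal := by
          rw [lintegral_rpow_compl_ball n hn hr haan, hCeq]
  -- inner Hölder
  have hf2 : ∀ y : Euc n, Measurable fun x : Euc n => ENNReal.ofReal (‖x - y‖ ^ (-p)) :=
    fun y => (((measurable_id.sub measurable_const).norm).pow measurable_const).ennreal_ofReal
  have inner : ∀ y ∈ W, (∫⁻ x in Ω, ENNReal.ofReal |h x| * ENNReal.ofReal (‖x - y‖ ^ (-p)))
      ≤ eLpNorm h 2 μΩ * ENNReal.ofReal Creal ^ (1/2 : ℝ) := by
    intro y hy
    have hH := ENNReal.lintegral_mul_le_Lp_mul_Lq μΩ h22 hhae (hf2 y).aemeasurable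
    simp only [Pi.mul_apply] at hH
    refine le_trans hH (mul_le_mul' (le_of_eq ?_) ?_)
    · rw [heLp h μΩ]
    · have hsq : ∫⁻ x in Ω, (ENNReal.ofReal (‖x - y‖ ^ (-p))) ^ (2 : ℝ)
          = ∫⁻ x in Ω, ENNReal.ofReal (‖x - y‖ ^ (-aa)) := by
        refine lintegral_congr fun x => ?_
        rw [ENNReal.ofReal_rpow_of_nonneg (Real.rpow_nonneg (norm_nonneg _) _)
            (by norm_num : (0:ℝ) ≤ 2),
          ← Real.rpow_mul (norm_nonneg _), show -p * 2 = -aa by rw [hp, haadef]; ring]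
      rw [hsq]
      exact ENNReal.rpow_le_rpow (hker2 y hy) (by norm_num)
  -- outer bound
  have hKne : eLpNorm h 2 μΩ * ENNReal.ofReal Creal ^ (1/2 : ℝ) ≠ ⊤ :=
    ENNReal.mul_ne_top hh.2.ne
      (ENNReal.rpow_ne_top_of_nonneg (by norm_num) ENNReal.ofReal_ne_top)
  have hgbound : (∫⁻ y in W, ENNReal.ofReal |g y|)
      ≤ eLpNorm g 2 μW * (volume W) ^ (1/2 : ℝ) := by
    have hH := ENNReal.lintegral_mul_le_Lp_mul_Lq μW h22 hgae
      (aemeasurable_const (b := (1 : ℝ≥0∞)))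
    simp only [Pi.mul_apply, mul_one] at hH
    refine le_trans hH (le_of_eq ?_)
    rw [heLp g μW]
    congr 1
    simp [lintegral_one, hμW, Measure.restrict_apply_univ]
  calc (∫⁻ x in Ω, ∫⁻ y in W, ENNReal.ofReal (|g y| * |h x| / ‖x - y‖ ^ p))
      = ∫⁻ y in W, ∫⁻ x in Ω, ENNReal.ofReal |g y| *
          (ENNReal.ofReal |h x| * ENNReal.ofReal (‖x - y‖ ^ (-p))) := hLHS
    _ ≤ ∫⁻ y in W, ENNReal.ofReal |g y| *
          (eLpNorm h 2 μΩ * ENNReal.ofReal Creal ^ (1/2 : ℝ)) := by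
        refine lintegral_mono_ae ((ae_restrict_iff' hWm).mpr (ae_of_all _ fun y hy => ?_))
        rw [lintegral_const_mul' _ _ ENNReal.ofReal_ne_top]
        exact mul_le_mul_right (inner y hy) _
    _ = (∫⁻ y in W, ENNReal.ofReal |g y|) *
          (eLpNorm h 2 μΩ * ENNReal.ofReal Creal ^ (1/2 : ℝ)) :=
        lintegral_mul_const' _ _ hKne
    _ ≤ (eLpNorm g 2 μW * (volume W) ^ (1/2 : ℝ)) *
          (eLpNorm h 2 μΩ * ENNReal.ofReal Creal ^ (1/2 : ℝ)) :=
        mul_le_mul_left hgbound _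
    _ = ENNReal.ofReal (Real.sqrt Creal * Real.sqrt ((volume W).toReal) *
          ((eLpNorm g 2 μW).toReal * (eLpNorm h 2 μΩ).toReal)) := by
        rw [ENNReal.ofReal_mul (by positivity), ENNReal.ofReal_mul (Real.sqrt_nonneg _),
          ENNReal.ofReal_mul ENNReal.toReal_nonneg,
          Real.sqrt_eq_rpow, Real.sqrt_eq_rpow,
          ← ENNReal.ofReal_rpow_of_nonneg hC0 (by norm_num),
          ← ENNReal.ofReal_rpow_of_nonneg ENNReal.toReal_nonneg (by norm_num),
          ENNReal.ofReal_toReal hWfin.ne, ENNReal.ofReal_toReal hg.2.ne,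
          ENNReal.ofReal_toReal hh.2.ne]
        ring

end
end

section
/- Let n ≥ 1, 0 < s < 1, and let γ ∈ L^∞(ℝⁿ) with γ ≥ γ₀ > 0 a.e. Let x₀ ∈ ℝⁿ and c > 0 be such that ess sup_{B(x₀,δ)} |γ − c| → 0 as δ → 0. Suppose (φ_N)_{N∈ℕ} ⊂ C_c^∞(ℝⁿ) is a sequence satisfying: (i) ‖φ_N‖_{L²(ℝⁿ)}² + (C_{n,s}/2)[φ_N]_s² = 1 for all N; (ii) ‖φ_N‖_{L²(ℝⁿ)} → 0 as N → ∞; (iii) there are radii r_N → 0 with supp(φ_N) ⊂ B(x₀, r_N) for all N. Then B_γ(φ_N, φ_N) → c as N → ∞. -/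
open MeasureTheory Filter
open scoped ENNReal Topology FourierTransform

noncomputable section

/-- Auxiliary: difference of square roots bound. -/
lemma sqrt_diff_le_aux {a b : ℝ} (ha : 0 ≤ a) (hb : 0 < b) :
    |Real.sqrt a - Real.sqrt b| ≤ |a - b| / Real.sqrt b := by
  have hsb : 0 < Real.sqrt b := Real.sqrt_pos.2 hb
  rw [le_div_iff₀ hsb]
  have h1 : Real.sqrt a * Real.sqrt a = a := Real.mul_self_sqrt ha
  have h2 : Real.sqrt b * Real.sqrt b = b := Real.mul_self_sqrt hb.le
  have key : |Real.sqrt a - Real.sqrt b| * (Real.sqrt a + Real.sqrt b) = |a - b| := by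
    rw [← abs_of_nonneg (by positivity : (0:ℝ) ≤ Real.sqrt a + Real.sqrt b), ← abs_mul]
    congr 1
    nlinarith [h1, h2]
  nlinarith [abs_nonneg (Real.sqrt a - Real.sqrt b), Real.sqrt_nonneg a, hsb]

/-- Auxiliary: bound for products of square roots near a positive value. -/
lemma sqrt_mul_sub_le_aux {a b M c ε : ℝ} (ha0 : 0 ≤ a) (haM : a ≤ M)
    (hb0 : 0 ≤ b) (hbM : b ≤ M) (hc : 0 < c)
    (hae : |a - c| ≤ ε) (hbe : |b - c| ≤ ε) :
    |Real.sqrt a * Real.sqrt b - c| ≤ (Real.sqrt M + Real.sqrt c) * (ε / Real.sqrt c) := by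
  have hsc : 0 < Real.sqrt c := Real.sqrt_pos.2 hc
  have h1 : |Real.sqrt a - Real.sqrt c| ≤ ε / Real.sqrt c :=
    (sqrt_diff_le_aux ha0 hc).trans (by gcongr)
  have h2 : |Real.sqrt b - Real.sqrt c| ≤ ε / Real.sqrt c :=
    (sqrt_diff_le_aux hb0 hc).trans (by gcongr)
  have hsaM : Real.sqrt a ≤ Real.sqrt M := Real.sqrt_le_sqrt haM
  have hsa0 : 0 ≤ Real.sqrt a := Real.sqrt_nonneg a
  have hcc : Real.sqrt c * Real.sqrt c = c := Real.mul_self_sqrt hc.le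
  have hdecomp : Real.sqrt a * Real.sqrt b - c
      = Real.sqrt a * (Real.sqrt b - Real.sqrt c) + Real.sqrt c * (Real.sqrt a - Real.sqrt c) := by
    ring_nf
    nlinarith [hcc]
  calc |Real.sqrt a * Real.sqrt b - c|
      ≤ |Real.sqrt a * (Real.sqrt b - Real.sqrt c)|
        + |Real.sqrt c * (Real.sqrt a - Real.sqrt c)| := by rw [hdecomp]; exact abs_add_le _ _
    _ = Real.sqrt a * |Real.sqrt b - Real.sqrt c|
        + Real.sqrt c * |Real.sqrt a - Real.sqrt c| := by
          rw [abs_mul, abs_mul, abs_of_nonneg hsa0, abs_of_nonneg hsc.le]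
    _ ≤ Real.sqrt M * (ε / Real.sqrt c) + Real.sqrt c * (ε / Real.sqrt c) := by
          exact add_le_add (mul_le_mul hsaM h2 (abs_nonneg _) (Real.sqrt_nonneg M))
            (mul_le_mul_of_nonneg_left h1 hsc.le)
    _ = (Real.sqrt M + Real.sqrt c) * (ε / Real.sqrt c) := by ring

set_option maxHeartbeats 2000000 in
/-- **Energy concentration** (key limit in the exterior determination argument):
for normalized test functions concentrating at a point of approximate continuity
of `γ` with value `c`, the energies `B_γ(φ_N,φ_N)` converge to `c`. -/
theorem stmt_7 (n : ℕ) (hn : 1 ≤ n) (s : ℝ) (hs0 : 0 < s) (hs1 : s < 1)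
    (γ : Euc n → ℝ) (γ₀ : ℝ) (hγ₀ : 0 < γ₀)
    (hγL : MemLp γ ⊤ volume) (hγe : ∀ᵐ x, γ₀ ≤ γ x)
    (x₀ : Euc n) (c : ℝ) (hc : 0 < c)
    (hloc : Tendsto
      (fun δ => (eLpNorm (fun x => γ x - c) ⊤ (volume.restrict (Metric.ball x₀ δ))).toReal)
      (𝓝[>] (0 : ℝ)) (𝓝 0))
    (φ : ℕ → Euc n → ℝ) (hφ : ∀ N, IsTestFun n Set.univ (φ N))
    (hnorm : ∀ N, (∫ x, (φ N x) ^ 2) +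
      Cns n s / 2 * (∫ p : Euc n × Euc n, gagliardoKer n s (φ N) (φ N) p) = 1)
    (hL2 : Tendsto (fun N => ∫ x, (φ N x) ^ 2) atTop (𝓝 0))
    (hsupp : ∃ rad : ℕ → ℝ, Tendsto rad atTop (𝓝 0) ∧
      ∀ N, tsupport (φ N) ⊆ Metric.ball x₀ (rad N)) :
    Tendsto (fun N => condForm n s γ (φ N) (φ N)) atTop (𝓝 c) := by
  classical
  obtain ⟨rad, hrad, hsuppr⟩ := hsupp
  set M : ℝ := (eLpNorm γ ⊤ volume).toReal with hMdef
  have hM0 : 0 ≤ M := ENNReal.toReal_nonneg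
  -- positivity of the constant
  have hCpos : 0 < Cns n s := by
    have h1 : 0 < Real.Gamma ((n : ℝ) / 2 + s) := Real.Gamma_pos_of_pos (by positivity)
    have h2 : Real.Gamma (-s) ≠ 0 := by
      apply Real.Gamma_ne_zero
      intro m hm
      rcases m with _ | k
      · simp at hm; linarith
      · push_cast at hm
        have hk : (0:ℝ) ≤ (k : ℝ) := Nat.cast_nonneg k
        nlinarith [hm]
    have h3 : 0 < |Real.Gamma (-s)| := abs_pos.2 h2
    unfold Cns
    positivity
  -- global a.e. bound on γ
  have hEne : eLpNormEssSup γ volume ≠ ⊤ := by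
    rw [← eLpNorm_exponent_top]; exact hγL.2.ne
  have hγbd : ∀ᵐ x, |γ x| ≤ M := by
    filter_upwards [ae_le_eLpNormEssSup (f := γ) (μ := volume)] with x hx
    have h := ENNReal.toReal_mono hEne hx
    rw [hMdef, eLpNorm_exponent_top]
    simpa [Real.norm_eq_abs] using h
  rw [Metric.tendsto_nhds]
  intro ε hε
  have hsc : 0 < Real.sqrt c := Real.sqrt_pos.2 hc
  set ε' : ℝ := ε / 3 * Real.sqrt c / (Real.sqrt M + Real.sqrt c + 1) with hε'def
  have hε'pos : 0 < ε' := by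
    have h1 : 0 ≤ Real.sqrt M := Real.sqrt_nonneg M
    rw [hε'def]; positivity
  set ε₁ : ℝ := (Real.sqrt M + Real.sqrt c) * (ε' / Real.sqrt c) with hε₁def
  have hε₁0 : 0 ≤ ε₁ := by
    have h1 : 0 ≤ Real.sqrt M := Real.sqrt_nonneg M
    rw [hε₁def]; positivity
  have hε₁le : ε₁ ≤ ε / 3 := by
    have h1 : ε' / Real.sqrt c = ε / 3 / (Real.sqrt M + Real.sqrt c + 1) := by
      rw [hε'def]; field_simp
    have hS : 0 ≤ Real.sqrt M + Real.sqrt c := by positivity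
    calc ε₁ = (Real.sqrt M + Real.sqrt c) / (Real.sqrt M + Real.sqrt c + 1) * (ε / 3) := by
          rw [hε₁def, h1]; ring
      _ ≤ 1 * (ε / 3) := by
          apply mul_le_mul_of_nonneg_right _ (by positivity)
          rw [div_le_one (by positivity)]; linarith
      _ = ε / 3 := one_mul _
  -- choose δ
  have hev : ∀ᶠ δ in 𝓝[>] (0:ℝ),
      (eLpNorm (fun x => γ x - c) ⊤ (volume.restrict (Metric.ball x₀ δ))).toReal < ε' :=
    hloc.eventually_lt_const hε'pos
  obtain ⟨δ, hδbd, hδmem⟩ := (hev.and eventually_mem_nhdsWithin).exists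
  have hδpos : 0 < δ := hδmem
  -- a.e. bound of |γ - c| on the ball
  have hfin2 : eLpNorm (fun x => γ x - c) ⊤ (volume.restrict (Metric.ball x₀ δ)) ≠ ⊤ := by
    have hb : ∀ᵐ x ∂(volume.restrict (Metric.ball x₀ δ)), ‖γ x - c‖ ≤ M + |c| := by
      apply ae_restrict_of_ae
      filter_upwards [hγbd] with x hx
      rw [Real.norm_eq_abs]
      have h4 := abs_le.1 hx
      have h5 := le_abs_self c
      have h6 := neg_abs_le c
      exact abs_le.2 ⟨by linarith, by linarith⟩
    rw [eLpNorm_exponent_top]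
    exact ((eLpNormEssSup_le_of_ae_bound hb).trans_lt ENNReal.ofReal_lt_top).ne
  have hball : ∀ᵐ x, x ∈ Metric.ball x₀ δ → |γ x - c| ≤ ε' := by
    rw [← ae_restrict_iff' measurableSet_ball]
    filter_upwards [ae_le_eLpNormEssSup (f := fun x => γ x - c)
      (μ := volume.restrict (Metric.ball x₀ δ))] with x hx
    have h2 := ENNReal.toReal_mono (by rwa [eLpNorm_exponent_top] at hfin2) hx
    rw [← eLpNorm_exponent_top (f := fun x => γ x - c)] at h2
    have h3 : ‖γ x - c‖ₑ.toReal = |γ x - c| := by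
      simp [Real.norm_eq_abs]
    rw [h3] at h2
    exact h2.trans hδbd.le
  -- the tail kernel G and its integral
  have he : (0:ℝ) < (n : ℝ) + 2 * s := by positivity
  set G : Euc n → ℝ := fun z => if δ/2 ≤ ‖z‖ then (‖z‖ ^ ((n : ℝ) + 2 * s))⁻¹ else 0 with hGdef
  have hGnn : ∀ z, 0 ≤ G z := by
    intro z; simp only [hGdef]; split
    · positivity
    · exact le_refl 0
  have hGmeas : Measurable G := by
    rw [hGdef]
    exact Measurable.ite (measurableSet_le measurable_const measurable_norm)
      ((continuous_norm.rpow_const fun x => Or.inr he.le).measurable).inv measurable_const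
  have hGint : Integrable G := by
    have hfr : (Module.finrank ℝ (Euc n) : ℝ) < (n : ℝ) + 2 * s := by
      rw [finrank_euclideanSpace_fin]; linarith
    have hint := integrable_one_add_norm (E := Euc n) (μ := volume) hfr
    refine (hint.const_mul ((2/δ + 1) ^ ((n : ℝ) + 2 * s))).mono'
      hGmeas.aestronglyMeasurable ?_
    filter_upwards with z
    rw [Real.norm_eq_abs, abs_of_nonneg (hGnn z)]
    simp only [hGdef]
    split
    case isTrue h =>
      have hz : 0 < ‖z‖ := lt_of_lt_of_le (by positivity) h
      have hz' : 0 < ‖z‖ ^ ((n : ℝ) + 2 * s) := Real.rpow_pos_of_pos hz _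
      have hy0 : (0:ℝ) < 1 + ‖z‖ := by positivity
      have hy' : 0 < ((1:ℝ) + ‖z‖) ^ ((n : ℝ) + 2 * s) := Real.rpow_pos_of_pos hy0 _
      have hkey : 1 + ‖z‖ ≤ (2/δ + 1) * ‖z‖ := by
        have h1 : 1 ≤ 2/δ * ‖z‖ := by
          rw [div_mul_eq_mul_div, le_div_iff₀ hδpos]
          linarith
        nlinarith [norm_nonneg z]
      have h2 : ((1:ℝ) + ‖z‖) ^ ((n : ℝ) + 2 * s)
          ≤ (2/δ + 1) ^ ((n : ℝ) + 2 * s) * ‖z‖ ^ ((n : ℝ) + 2 * s) := by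
        rw [← Real.mul_rpow (by positivity) (norm_nonneg z)]
        exact Real.rpow_le_rpow (by positivity) hkey he.le
      rw [Real.rpow_neg hy0.le, inv_eq_one_div, inv_eq_one_div, mul_one_div,
        div_le_div_iff₀ hz' hy', one_mul]
      linarith
    case isFalse h =>
      positivity
  set Cδ : ℝ := ∫ z, G z with hCδ
  have hCδ0 : 0 ≤ Cδ := integral_nonneg hGnn
  set T : ℝ := Cns n s * (M + c) * Cδ + c + 1 with hTdef
  have hTpos : 0 < T := by rw [hTdef]; positivity
  -- eventual conditions
  have h1ev : ∀ᶠ N in atTop, rad N < δ/2 := hrad.eventually_lt_const (by positivity)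
  have h2aev : ∀ᶠ N in atTop, (∫ x, (φ N x)^2) < 1/2 := hL2.eventually_lt_const one_half_pos
  have h2bev : ∀ᶠ N in atTop, (∫ x, (φ N x)^2) < ε/3/T :=
    hL2.eventually_lt_const (by positivity)
  filter_upwards [h1ev, h2aev, h2bev] with N hN1 hN2a hN2b
  rw [Real.dist_eq]
  -- fixed N from here on
  have hnormN := hnorm N
  have hsuppN : tsupport (φ N) ⊆ Metric.ball x₀ (δ/2) :=
    (hsuppr N).trans (Metric.ball_subset_ball hN1.le)
  obtain ⟨hψsm, hψcs, -⟩ := hφ N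
  have hψc : Continuous (φ N) := hψsm.continuous
  set ψ : Euc n → ℝ := φ N with hψdef
  set K : Euc n × Euc n → ℝ := gagliardoKer n s ψ ψ with hKdef
  have hKnn : ∀ p, 0 ≤ K p := fun p =>
    div_nonneg (mul_self_nonneg _) (Real.rpow_nonneg (norm_nonneg _) _)
  have hKmeas : Measurable K := by
    rw [hKdef]; unfold gagliardoKer
    exact Measurable.div
      (((hψc.comp continuous_fst).sub (hψc.comp continuous_snd)).mul
        ((hψc.comp continuous_fst).sub (hψc.comp continuous_snd))).measurable
      ((continuous_fst.sub continuous_snd).norm.rpow_const fun x =>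
        Or.inr (by positivity)).measurable
  set L2 : ℝ := ∫ x, ψ x ^ 2 with hL2def
  have hL2nn : 0 ≤ L2 := by
    rw [hL2def]; exact integral_nonneg fun x => sq_nonneg _
  have hIKval : Cns n s / 2 * ∫ p, K p = 1 - L2 := by linarith
  have hKint : Integrable K := by
    by_contra hcon
    rw [integral_undef hcon] at hIKval
    simp at hIKval
    linarith
  have hIKnn : (0:ℝ) ≤ ∫ p, K p := integral_nonneg hKnn
  have hIKle : (∫ p, K p) ≤ 2 / Cns n s := by
    rw [le_div_iff₀ hCpos]
    linarith [hIKval, hL2nn]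
  -- a.e. bounds on the product
  have haeX : ∀ᵐ x : Euc n, 0 ≤ γ x ∧ γ x ≤ M ∧ (x ∈ Metric.ball x₀ δ → |γ x - c| ≤ ε') := by
    filter_upwards [hγe, hγbd, hball] with x h1 h2 h3
    exact ⟨le_trans hγ₀.le h1, le_trans (le_abs_self _) h2, h3⟩
  have haeP : ∀ᵐ p : Euc n × Euc n,
      (0 ≤ γ p.1 ∧ γ p.1 ≤ M ∧ (p.1 ∈ Metric.ball x₀ δ → |γ p.1 - c| ≤ ε')) ∧
      (0 ≤ γ p.2 ∧ γ p.2 ≤ M ∧ (p.2 ∈ Metric.ball x₀ δ → |γ p.2 - c| ≤ ε')) :=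
    (Measure.quasiMeasurePreserving_fst.ae haeX).and
      (Measure.quasiMeasurePreserving_snd.ae haeX)
  set g : Euc n × Euc n → ℝ := fun p => Real.sqrt (γ p.1) * Real.sqrt (γ p.2) with hgdef
  have hgsm : AEStronglyMeasurable g volume := by
    rw [hgdef]
    exact (Real.continuous_sqrt.comp_aestronglyMeasurable
        (hγL.1.comp_quasiMeasurePreserving Measure.quasiMeasurePreserving_fst)).mul
      (Real.continuous_sqrt.comp_aestronglyMeasurable
        (hγL.1.comp_quasiMeasurePreserving Measure.quasiMeasurePreserving_snd))
  have hcond : condForm n s γ ψ ψ = Cns n s / 2 * ∫ p, g p * K p := by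
    unfold condForm
    congr 1
    apply integral_congr_ae
    apply Filter.Eventually.of_forall
    intro p
    simp only [hgdef, hKdef]
    unfold gagliardoKer
    rw [mul_assoc, mul_div_assoc]
  have hgbd : ∀ᵐ p : Euc n × Euc n, 0 ≤ g p ∧ g p ≤ M := by
    filter_upwards [haeP] with p hp
    constructor
    · simp only [hgdef]; positivity
    · simp only [hgdef]
      calc Real.sqrt (γ p.1) * Real.sqrt (γ p.2) ≤ Real.sqrt M * Real.sqrt M :=
            mul_le_mul (Real.sqrt_le_sqrt hp.1.2.1) (Real.sqrt_le_sqrt hp.2.2.1)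
              (Real.sqrt_nonneg _) (Real.sqrt_nonneg _)
        _ = M := Real.mul_self_sqrt hM0
  have hgK : Integrable (fun p => g p * K p) := by
    refine (hKint.const_mul M).mono' (hgsm.mul hKmeas.aestronglyMeasurable) ?_
    filter_upwards [hgbd] with p hp
    rw [Real.norm_eq_abs, abs_of_nonneg (mul_nonneg hp.1 (hKnn p))]
    exact mul_le_mul_of_nonneg_right hp.2 (hKnn p)
  have hcKi : Integrable (fun p => c * K p) := hKint.const_mul c
  have hgcK : Integrable (fun p => (g p - c) * K p) := by
    have heq : (fun p => (g p - c) * K p) = fun p => g p * K p - c * K p := by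
      funext p; ring
    rw [heq]; exact hgK.sub hcKi
  -- the majorant functions F1, F2
  set F1 : Euc n × Euc n → ℝ := fun p => ψ p.1 ^ 2 * G (p.1 - p.2) with hF1def
  set F2 : Euc n × Euc n → ℝ := fun p => ψ p.2 ^ 2 * G (p.1 - p.2) with hF2def
  set F1' : Euc n × Euc n → ℝ := fun p => ψ p.1 ^ 2 * G (p.2 - p.1) with hF1'def
  have hψ2int : Integrable (fun x => ψ x ^ 2) := by
    have hcs : HasCompactSupport (fun x => ψ x ^ 2) :=
      HasCompactSupport.comp_left (g := fun t : ℝ => t ^ 2) hψcs (by norm_num)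
    exact (hψc.pow 2).integrable_of_hasCompactSupport hcs
  have hF1meas : AEStronglyMeasurable F1 ((volume : Measure (Euc n)).prod volume) := by
    rw [hF1def]
    exact (((hψc.comp continuous_fst).pow 2).measurable.mul
      (hGmeas.comp (measurable_fst.sub measurable_snd))).aestronglyMeasurable
  have hF1'meas : AEStronglyMeasurable F1' ((volume : Measure (Euc n)).prod volume) := by
    rw [hF1'def]
    exact (((hψc.comp continuous_fst).pow 2).measurable.mul
      (hGmeas.comp (measurable_snd.sub measurable_fst))).aestronglyMeasurable
  have hF1int : Integrable F1 ((volume : Measure (Euc n)).prod volume) := by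
    rw [integrable_prod_iff hF1meas]
    constructor
    · apply Filter.Eventually.of_forall
      intro x
      simp only [hF1def]
      exact (hGint.comp_sub_left x).const_mul _
    · have heq : (fun x => ∫ y, ‖F1 (x, y)‖) = fun x => ψ x ^ 2 * Cδ := by
        funext x
        simp only [hF1def]
        simp_rw [norm_mul, Real.norm_eq_abs, abs_of_nonneg (sq_nonneg (ψ x)),
          abs_of_nonneg (hGnn _)]
        rw [integral_const_mul, integral_sub_left_eq_self G volume x, ← hCδ]
      rw [heq]
      exact hψ2int.mul_const Cδ
  have hF1val : ∫ p, F1 p ∂((volume : Measure (Euc n)).prod volume) = L2 * Cδ := by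
    rw [integral_prod _ hF1int]
    have heq : (fun x => ∫ y, F1 (x, y)) = fun x => ψ x ^ 2 * Cδ := by
      funext x
      simp only [hF1def]
      rw [integral_const_mul, integral_sub_left_eq_self G volume x, ← hCδ]
    rw [heq, integral_mul_const, ← hL2def]
  have hF1'int : Integrable F1' ((volume : Measure (Euc n)).prod volume) := by
    rw [integrable_prod_iff hF1'meas]
    constructor
    · apply Filter.Eventually.of_forall
      intro x
      simp only [hF1'def]
      exact (hGint.comp_sub_right x).const_mul _
    · have heq : (fun x => ∫ y, ‖F1' (x, y)‖) = fun x => ψ x ^ 2 * Cδ := by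
        funext x
        simp only [hF1'def]
        simp_rw [norm_mul, Real.norm_eq_abs, abs_of_nonneg (sq_nonneg (ψ x)),
          abs_of_nonneg (hGnn _)]
        rw [integral_const_mul, integral_sub_right_eq_self G x, ← hCδ]
      rw [heq]
      exact hψ2int.mul_const Cδ
  have hF1'val : ∫ p, F1' p ∂((volume : Measure (Euc n)).prod volume) = L2 * Cδ := by
    rw [integral_prod _ hF1'int]
    have heq : (fun x => ∫ y, F1' (x, y)) = fun x => ψ x ^ 2 * Cδ := by
      funext x
      simp only [hF1'def]
      rw [integral_const_mul, integral_sub_right_eq_self G x, ← hCδ]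
    rw [heq, integral_mul_const, ← hL2def]
  have hF2eq : F2 = fun z : Euc n × Euc n => F1' z.swap := by
    funext p
    simp only [hF2def, hF1'def, Prod.swap]
  have hF2int : Integrable F2 ((volume : Measure (Euc n)).prod volume) := by
    rw [hF2eq]; exact hF1'int.swap
  have hF2val : ∫ p, F2 p ∂((volume : Measure (Euc n)).prod volume) = L2 * Cδ := by
    rw [hF2eq, integral_prod_swap F1', hF1'val]
  have hF1intv : Integrable F1 (volume : Measure (Euc n × Euc n)) := hF1int
  have hF2intv : Integrable F2 (volume : Measure (Euc n × Euc n)) := hF2int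
  have hF1valv : ∫ p, F1 p = L2 * Cδ := hF1val
  have hF2valv : ∫ p, F2 p = L2 * Cδ := hF2val
  have hF12nn : ∀ p, 0 ≤ F1 p + F2 p := by
    intro p
    simp only [hF1def, hF2def]
    have := hGnn (p.1 - p.2)
    positivity
  -- the set A
  set A : Set (Euc n × Euc n) := (Metric.ball x₀ δ) ×ˢ (Metric.ball x₀ δ) with hAdef
  have hA : MeasurableSet A := measurableSet_ball.prod measurableSet_ball
  -- pointwise bound off A
  have hptw : ∀ p ∈ Aᶜ, K p ≤ F1 p + F2 p := by
    intro p hp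
    rw [Set.mem_compl_iff, hAdef, Set.mem_prod, not_and_or] at hp
    have hKform : K p = (ψ p.1 - ψ p.2) * (ψ p.1 - ψ p.2) / ‖p.1 - p.2‖ ^ ((n : ℝ) + 2 * s) := by
      rw [hKdef]; rfl
    rcases hp with h1 | h2
    · have hz1 : ψ p.1 = 0 := by
        apply image_eq_zero_of_notMem_tsupport
        intro hmem
        exact h1 (Metric.ball_subset_ball (by linarith) (hsuppN hmem))
      by_cases hz2 : ψ p.2 = 0
      · have hK0 : K p = 0 := by rw [hKform, hz1, hz2]; simp
        rw [hK0]; exact hF12nn p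
      · have hp2 : p.2 ∈ Metric.ball x₀ (δ/2) := hsuppN (subset_tsupport _ hz2)
        have hd : δ/2 ≤ ‖p.1 - p.2‖ := by
          have ha : δ ≤ dist p.1 x₀ := not_lt.1 (fun h => h1 (Metric.mem_ball.2 h))
          have hb : dist p.2 x₀ < δ/2 := Metric.mem_ball.1 hp2
          have htri : dist p.1 x₀ ≤ dist p.1 p.2 + dist p.2 x₀ := dist_triangle _ _ _
          rw [← dist_eq_norm]
          linarith
        have hKval : K p = F2 p := by
          rw [hKform, hz1]
          simp only [hF2def, hGdef]
          rw [if_pos hd, div_eq_mul_inv]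
          ring
        rw [hKval]
        have h0 : 0 ≤ F1 p := by
          simp only [hF1def]
          have := hGnn (p.1 - p.2)
          positivity
        linarith
    · have hz2 : ψ p.2 = 0 := by
        apply image_eq_zero_of_notMem_tsupport
        intro hmem
        exact h2 (Metric.ball_subset_ball (by linarith) (hsuppN hmem))
      by_cases hz1 : ψ p.1 = 0
      · have hK0 : K p = 0 := by rw [hKform, hz1, hz2]; simp
        rw [hK0]; exact hF12nn p
      · have hp1 : p.1 ∈ Metric.ball x₀ (δ/2) := hsuppN (subset_tsupport _ hz1)
        have hd : δ/2 ≤ ‖p.1 - p.2‖ := by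
          have ha : δ ≤ dist p.2 x₀ := not_lt.1 (fun h => h2 (Metric.mem_ball.2 h))
          have hb : dist p.1 x₀ < δ/2 := Metric.mem_ball.1 hp1
          have htri : dist p.2 x₀ ≤ dist p.2 p.1 + dist p.1 x₀ := dist_triangle _ _ _
          have hsymm : dist p.2 p.1 = ‖p.1 - p.2‖ := by
            rw [dist_comm, dist_eq_norm]
          linarith
        have hKval : K p = F1 p := by
          rw [hKform, hz2]
          simp only [hF1def, hGdef]
          rw [if_pos hd, div_eq_mul_inv]
          ring
        rw [hKval]
        have h0 : 0 ≤ F2 p := by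
          simp only [hF2def]
          have := hGnn (p.1 - p.2)
          positivity
        linarith
  -- estimate on A
  have hsplitA : (∫ p in A, |(g p - c) * K p|) ≤ ε₁ * ∫ p, K p := by
    have hb1 : (∫ p in A, |(g p - c) * K p|) ≤ ∫ p in A, ε₁ * K p := by
      apply integral_mono_ae hgcK.abs.integrableOn ((hKint.const_mul ε₁).integrableOn)
      filter_upwards [ae_restrict_mem hA, ae_restrict_of_ae haeP] with p hpA hp
      rw [hAdef, Set.mem_prod] at hpA
      have hgc : |g p - c| ≤ ε₁ := by
        rw [hgdef, hε₁def]
        exact sqrt_mul_sub_le_aux hp.1.1 hp.1.2.1 hp.2.1 hp.2.2.1 hc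
          (hp.1.2.2 hpA.1) (hp.2.2.2 hpA.2)
      rw [abs_mul, abs_of_nonneg (hKnn p)]
      exact mul_le_mul_of_nonneg_right hgc (hKnn p)
    have hb2 : (∫ p in A, ε₁ * K p) = ε₁ * ∫ p in A, K p := integral_const_mul _ _
    have hb3 : (∫ p in A, K p) ≤ ∫ p, K p :=
      setIntegral_le_integral hKint (Filter.Eventually.of_forall hKnn)
    calc (∫ p in A, |(g p - c) * K p|) ≤ ε₁ * ∫ p in A, K p := hb1.trans_eq hb2
      _ ≤ ε₁ * ∫ p, K p := mul_le_mul_of_nonneg_left hb3 hε₁0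
  -- estimate off A
  have hsplitB : (∫ p in Aᶜ, |(g p - c) * K p|) ≤ (M + c) * (2 * (L2 * Cδ)) := by
    have hb1 : (∫ p in Aᶜ, |(g p - c) * K p|) ≤ ∫ p in Aᶜ, (M + c) * K p := by
      apply integral_mono_ae hgcK.abs.integrableOn ((hKint.const_mul (M + c)).integrableOn)
      filter_upwards [ae_restrict_of_ae hgbd] with p hp
      rw [abs_mul, abs_of_nonneg (hKnn p)]
      apply mul_le_mul_of_nonneg_right _ (hKnn p)
      exact abs_le.2 ⟨by linarith [hp.1, hp.2], by linarith [hp.1, hp.2]⟩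
    have hb2 : (∫ p in Aᶜ, (M + c) * K p) = (M + c) * ∫ p in Aᶜ, K p := integral_const_mul _ _
    have hb3 : (∫ p in Aᶜ, K p) ≤ ∫ p in Aᶜ, (F1 p + F2 p) :=
      setIntegral_mono_on hKint.integrableOn ((hF1intv.add hF2intv).integrableOn) hA.compl hptw
    have hb4 : (∫ p in Aᶜ, (F1 p + F2 p)) ≤ ∫ p, (F1 p + F2 p) :=
      setIntegral_le_integral (hF1intv.add hF2intv) (Filter.Eventually.of_forall hF12nn)
    have hb5 : (∫ p, (F1 p + F2 p)) = L2 * Cδ + L2 * Cδ := by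
      rw [integral_add hF1intv hF2intv, hF1valv, hF2valv]
    have hMc : (0:ℝ) ≤ M + c := by linarith
    calc (∫ p in Aᶜ, |(g p - c) * K p|) ≤ (M + c) * ∫ p in Aᶜ, K p := hb1.trans_eq hb2
      _ ≤ (M + c) * (L2 * Cδ + L2 * Cδ) := by
          apply mul_le_mul_of_nonneg_left _ hMc
          calc (∫ p in Aᶜ, K p) ≤ ∫ p in Aᶜ, (F1 p + F2 p) := hb3
            _ ≤ ∫ p, (F1 p + F2 p) := hb4
            _ = L2 * Cδ + L2 * Cδ := hb5
      _ = (M + c) * (2 * (L2 * Cδ)) := by ring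
  -- key estimate
  have hKey : |(∫ p, g p * K p) - c * ∫ p, K p|
      ≤ ε₁ * (2 / Cns n s) + (M + c) * (2 * (L2 * Cδ)) := by
    have h0 : (∫ p, g p * K p) - c * ∫ p, K p = ∫ p, (g p - c) * K p := by
      have heq : (fun p => (g p - c) * K p) = fun p => g p * K p - c * K p := by
        funext p; ring
      rw [heq, integral_sub hgK hcKi, integral_const_mul]
    rw [h0]
    calc |∫ p, (g p - c) * K p| ≤ ∫ p, |(g p - c) * K p| := by
          calc |∫ p, (g p - c) * K p| = ‖∫ p, (g p - c) * K p‖ := (Real.norm_eq_abs _).symm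
            _ ≤ ∫ p, ‖(g p - c) * K p‖ := norm_integral_le_integral_norm _
            _ = ∫ p, |(g p - c) * K p| := by simp only [Real.norm_eq_abs]
      _ = (∫ p in A, |(g p - c) * K p|) + ∫ p in Aᶜ, |(g p - c) * K p| :=
          (integral_add_compl hA hgcK.abs).symm
      _ ≤ ε₁ * (∫ p, K p) + (M + c) * (2 * (L2 * Cδ)) := add_le_add hsplitA hsplitB
      _ ≤ ε₁ * (2 / Cns n s) + (M + c) * (2 * (L2 * Cδ)) :=
          add_le_add (mul_le_mul_of_nonneg_left hIKle hε₁0) le_rfl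
  -- final computation
  have hfinal : |condForm n s γ ψ ψ - c| ≤ ε₁ + (Cns n s * (M + c) * Cδ + c) * L2 := by
    have hdecomp : condForm n s γ ψ ψ - c
        = Cns n s / 2 * ((∫ p, g p * K p) - c * ∫ p, K p)
          + c * (Cns n s / 2 * (∫ p, K p) - 1) := by
      rw [hcond]; ring
    rw [hdecomp]
    have habs2 : |Cns n s / 2 * (∫ p, K p) - 1| = L2 := by
      rw [hIKval]
      simp [abs_of_nonneg hL2nn]
    calc |Cns n s / 2 * ((∫ p, g p * K p) - c * ∫ p, K p)
          + c * (Cns n s / 2 * (∫ p, K p) - 1)|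
        ≤ |Cns n s / 2 * ((∫ p, g p * K p) - c * ∫ p, K p)|
          + |c * (Cns n s / 2 * (∫ p, K p) - 1)| := abs_add_le _ _
      _ = Cns n s / 2 * |(∫ p, g p * K p) - c * ∫ p, K p|
          + c * |Cns n s / 2 * (∫ p, K p) - 1| := by
          rw [abs_mul, abs_mul, abs_of_nonneg (by positivity : (0:ℝ) ≤ Cns n s / 2),
            abs_of_nonneg hc.le]
      _ ≤ Cns n s / 2 * (ε₁ * (2 / Cns n s) + (M + c) * (2 * (L2 * Cδ))) + c * L2 := by
          rw [habs2]
          exact add_le_add (mul_le_mul_of_nonneg_left hKey (by positivity)) le_rfl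
      _ = ε₁ + (Cns n s * (M + c) * Cδ + c) * L2 := by
          field_simp
          ring
  have hTL2 : T * L2 < ε/3 := by
    have h := mul_lt_mul_of_pos_left hN2b hTpos
    rw [mul_comm T (ε/3/T)] at h
    rw [div_mul_cancel₀ _ hTpos.ne'] at h
    exact lt_of_le_of_lt (mul_le_mul_of_nonneg_left (le_refl L2) hTpos.le) h
  have hcoef : (Cns n s * (M + c) * Cδ + c) * L2 ≤ T * L2 := by
    apply mul_le_mul_of_nonneg_right _ hL2nn
    rw [hTdef]; linarith
  calc |condForm n s γ ψ ψ - c| ≤ ε₁ + (Cns n s * (M + c) * Cδ + c) * L2 := hfinal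
    _ ≤ ε/3 + T * L2 := add_le_add hε₁le hcoef
    _ < ε/3 + ε/3 := by linarith
    _ < ε := by linarith

end
end
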